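/- arXiv:2010.14039 — 3 statements merged into one kernel-verified Lean document; each statement's English description precedes it below -/
import Mathlib

section
/- Let P(n) = Σ_{k=0}^r c_k n^k be a polynomial with complex coefficients, let φ ∈ (0,1], and suppose that for every ε > 0 there exists N such that for all integers n ≥ N, P(n) ≠ 0 and Arg(P(n)) ∈ (π(φ−ε), πφ]. Then the leading nonzero coefficient of P has argument exactly πφ; that is, if c_r = ⋯ = c_{j+1} = 0 and c_j ≠ 0, then Arg(c_j) = πφ. -/
/-! With `c_j` the top nonzero coefficient, `P(n) / n ^ j → c_j`, and dividing by the positive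
real `n ^ j` leaves the argument unchanged, so `arg (P(n) / n ^ j) → πφ`. Since `arg` is continuous
away from `0` as a map to `Real.Angle`, and `πφ ∈ (-π, π]`, the nonzero limit `c_j` has argument
`πφ`; this also covers `πφ = π`, where the real-valued `arg` jumps. -/

open Filter Topology Bornology Finset

theorem tendsto_of_forall_eventually_mem_Ioc {α : Type*} {l : Filter α} {u : α → ℝ} {a : ℝ}
    (h : ∀ ε > 0, ∀ᶠ x in l, u x ∈ Set.Ioc (a - ε) a) : Tendsto u l (𝓝 a) := by
  refine tendsto_order.2 ⟨fun b hb => ?_, fun b hb => ?_⟩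
  · filter_upwards [h (a - b) (sub_pos.2 hb)] with x hx
    linarith [hx.1]
  · filter_upwards [h 1 one_pos] with x hx
    exact hx.2.trans_lt hb

theorem Finset.sum_range_succ_eq_of_eq_zero {M : Type*} [AddCommMonoid M] {f : ℕ → M} {j r : ℕ}
    (hjr : j ≤ r) (hf : ∀ k, j < k → k ≤ r → f k = 0) :
    ∑ k ∈ range (r + 1), f k = ∑ k ∈ range (j + 1), f k := by
  refine (sum_subset (range_subset_range.2 (by omega)) fun k hkr hkj => ?_).symm
  simp only [mem_range] at hkr hkj
  exact hf k (by omega) (by omega)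

theorem tendsto_sum_mul_pow_div_pow_cobounded {𝕜 : Type*} [NormedField 𝕜] (c : ℕ → 𝕜) (j : ℕ) :
    Tendsto (fun z : 𝕜 => (∑ k ∈ range (j + 1), c k * z ^ k) / z ^ j) (cobounded 𝕜)
      (𝓝 (c j)) := by
  -- In `w = z⁻¹` the quotient is the reversed polynomial `∑ c k * w ^ (j - k)`.
  set g : 𝕜 → 𝕜 := fun w => ∑ k ∈ range (j + 1), c k * w ^ (j - k)
  have hg0 : g 0 = c j := by
    change ∑ k ∈ range (j + 1), c k * (0 : 𝕜) ^ (j - k) = c j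
    rw [sum_eq_single_of_mem j (self_mem_range_succ j) fun k hk hkj => ?_]
    · simp
    · have : k < j := lt_of_le_of_ne (Nat.lt_succ_iff.1 (mem_range.1 hk)) hkj
      simp [zero_pow (Nat.sub_ne_zero_of_lt this)]
  have hg : Tendsto (fun z : 𝕜 => g z⁻¹) (cobounded 𝕜) (𝓝 (c j)) := by
    have hg_cont : Continuous g := continuous_finsetSum _ fun k _ => by fun_prop
    exact hg0 ▸ hg_cont.continuousAt.tendsto.comp tendsto_inv₀_cobounded
  refine hg.congr' ?_
  filter_upwards [eventually_ne_cobounded 0] with z hz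
  rw [sum_div]
  refine sum_congr rfl fun k hk => ?_
  have hkj : k + (j - k) = j := Nat.add_sub_cancel' (Nat.lt_succ_iff.1 (mem_range.1 hk))
  rw [inv_pow, ← hkj, pow_add, Nat.add_sub_cancel_left]
  field_simp

theorem Complex.arg_eq_of_tendsto {α : Type*} {l : Filter α} [l.NeBot] {z : α → ℂ} {w : ℂ}
    {θ : ℝ} (hz : Tendsto z l (𝓝 w)) (hw : w ≠ 0) (harg : Tendsto (fun x => arg (z x)) l (𝓝 θ))
    (hθ : θ ∈ Set.Ioc (-Real.pi) Real.pi) : arg w = θ := by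
  have h₁ : Tendsto (fun x => (arg (z x) : Real.Angle)) l (𝓝 (arg w)) :=
    (continuousAt_arg_coe_angle hw).tendsto.comp hz
  have h₂ : Tendsto (fun x => (arg (z x) : Real.Angle)) l (𝓝 θ) :=
    (Real.Angle.continuous_coe.tendsto θ).comp harg
  rw [arg_coe_angle_eq_iff_eq_toReal.1 (tendsto_nhds_unique h₁ h₂),
    Real.Angle.toReal_coe_eq_self_iff_mem_Ioc.2 hθ]

theorem Complex.arg_div_pow_intCast {n : ℤ} (hn : 0 < n) (z : ℂ) (j : ℕ) :
    arg (z / (n : ℂ) ^ j) = arg z := by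
  have : z / (n : ℂ) ^ j = z * (((n : ℝ) ^ j)⁻¹ : ℝ) := by push_cast; ring
  rw [this, arg_mul_real (by positivity)]

theorem leading_nonzero_coeff_arg
    (r : ℕ) (c : ℕ → ℂ) (φ : ℝ) (hφ : 0 < φ ∧ φ ≤ 1)
    (h : ∀ ε : ℝ, 0 < ε → ∃ N : ℤ, ∀ n : ℤ, N ≤ n →
      (∑ k ∈ Finset.range (r + 1), c k * (n : ℂ) ^ k) ≠ 0 ∧
      Real.pi * (φ - ε) < Complex.arg (∑ k ∈ Finset.range (r + 1), c k * (n : ℂ) ^ k) ∧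
      Complex.arg (∑ k ∈ Finset.range (r + 1), c k * (n : ℂ) ^ k) ≤ Real.pi * φ) :
    ∀ j : ℕ, j ≤ r → (∀ k : ℕ, j < k → k ≤ r → c k = 0) → c j ≠ 0 →
      Complex.arg (c j) = Real.pi * φ := by
  intro j hjr hzero hcj
  set P : ℤ → ℂ := fun n => ∑ k ∈ range (r + 1), c k * (n : ℂ) ^ k
  have hP : Tendsto (fun n : ℤ => P n / (n : ℂ) ^ j) atTop (𝓝 (c j)) := by
    have hP_eq : ∀ n : ℤ, P n = ∑ k ∈ range (j + 1), c k * (n : ℂ) ^ k := fun n =>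
      sum_range_succ_eq_of_eq_zero hjr fun k hjk hkr => by rw [hzero k hjk hkr, zero_mul]
    simp only [hP_eq]
    exact (tendsto_sum_mul_pow_div_pow_cobounded c j).comp tendsto_intCast_atTop_cobounded
  have harg : Tendsto (fun n => Complex.arg (P n)) atTop (𝓝 (Real.pi * φ)) := by
    refine tendsto_of_forall_eventually_mem_Ioc fun ε hε => ?_
    obtain ⟨N, hN⟩ := h (ε / Real.pi) (div_pos hε Real.pi_pos)
    filter_upwards [eventually_ge_atTop N] with n hn
    obtain ⟨-, hlo, hhi⟩ := hN n hn
    rw [mul_sub, mul_div_cancel₀ _ Real.pi_ne_zero] at hlo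
    exact ⟨hlo, hhi⟩
  have harg' : Tendsto (fun n => Complex.arg (P n / (n : ℂ) ^ j)) atTop (𝓝 (Real.pi * φ)) :=
    harg.congr' <| (eventually_gt_atTop 0).mono fun n hn =>
      (Complex.arg_div_pow_intCast hn (P n) j).symm
  exact Complex.arg_eq_of_tendsto hP hcj harg'
    ⟨by nlinarith [Real.pi_pos], by nlinarith [Real.pi_pos]⟩
end

section
/- Let a_0,…,a_r and b_0,…,b_r be real numbers with (a_r, b_r) ≠ (0,0), and set P(n) = Σ_{k=0}^r (a_k + i b_k) n^k. Suppose there exists N such that for all integers n ≥ N, Im(P(n) · conj(a_r + i b_r)) ≤ 0. Then b_r a_{r-1} − b_{r-1} a_r ≥ 0. -/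
/-!
Write `w = a_r + i b_r` and `c_k = Im((a_k + i b_k) w̄) = b_k a_r - a_k b_r`. Multiplying by `w̄`
rotates `P(n)` so that `Im(P(n) w̄) = ∑ c_k n^k` is a real polynomial in `n` with `c_r = 0`; its
coefficient of `n^(r-1)` is `c_{r-1} = b_{r-1} a_r - a_{r-1} b_r`, the negative of the quantity in
the conclusion. If that coefficient were positive, the polynomial would be positive for all large
`n`, contradicting the hypothesis.
-/

open Filter Asymptotics Finset ComplexConjugate

theorem eventually_pos_sum_range_succ_mul_pow {c : ℕ → ℝ} {d : ℕ} (hc : 0 < c d) :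
    ∀ᶠ x : ℝ in atTop, 0 < ∑ k ∈ range (d + 1), c k * x ^ k := by
  have hlow : (fun x : ℝ => ∑ k ∈ range d, c k * x ^ k) =o[atTop] fun x => x ^ d :=
    IsLittleO.fun_sum fun k hk =>
      (isLittleO_pow_pow_atTop_of_lt (mem_range.mp hk)).const_mul_left (c k)
  have hhalf : 0 < c d / 2 := half_pos hc
  filter_upwards [hlow.bound hhalf, eventually_gt_atTop 0] with x hbound hx
  have hxd : 0 < x ^ d := pow_pos hx d
  rw [Real.norm_eq_abs, Real.norm_eq_abs, abs_of_pos hxd] at hbound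
  rw [sum_range_succ]
  nlinarith [neg_abs_le (∑ k ∈ range d, c k * x ^ k)]

theorem Complex.im_mul_conj (z w : ℂ) : (z * conj w).im = z.im * w.re - z.re * w.im := by
  simp only [mul_im, conj_re, conj_im]
  ring

theorem Complex.im_sum_mul_ofReal_pow_mul_conj (z : ℕ → ℂ) (w : ℂ) (s : Finset ℕ) (x : ℝ) :
    ((∑ k ∈ s, z k * (x : ℂ) ^ k) * conj w).im = ∑ k ∈ s, (z k * conj w).im * x ^ k := by
  rw [sum_mul, im_sum]
  refine sum_congr rfl fun k _ => ?_
  rw [mul_right_comm, ← ofReal_pow, im_mul_ofReal]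

theorem quadratic_ineq_from_half_plane_general
    (r : ℕ) (a b : ℕ → ℝ)
    (h : ∃ N : ℤ, ∀ n : ℤ, N ≤ n →
      ((∑ k ∈ Finset.range (r + 1), (a k + Complex.I * b k) * (n : ℂ) ^ k) *
        (starRingEnd ℂ) (a r + Complex.I * b r)).im ≤ 0) :
    0 ≤ b r * a (r - 1) - b (r - 1) * a r := by
  set c : ℕ → ℝ := fun k => b k * a r - a k * b r with hc
  have him (k : ℕ) : ((a k + Complex.I * b k) * conj (a r + Complex.I * b r)).im = c k := by
    rw [Complex.im_mul_conj]
    simp only [Complex.add_re, Complex.add_im, Complex.mul_re, Complex.mul_im,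
      Complex.I_re, Complex.I_im, Complex.ofReal_re, Complex.ofReal_im, hc]
    ring
  have hcr : c r = 0 := by simp only [hc]; ring
  by_contra! hneg
  have hlead : 0 < c (r - 1) := by simp only [hc]; linarith
  -- for `r = 0` the truncated `r - 1` is `r`, and `c r = 0`
  have hr : r - 1 + 1 = r := Nat.sub_add_cancel <| Nat.one_le_iff_ne_zero.mpr <| by
    rintro rfl
    exact hlead.ne' hcr
  obtain ⟨N, hN⟩ := h
  obtain ⟨n, hnN, hpos⟩ := ((eventually_ge_atTop N).and <|
    tendsto_intCast_atTop_atTop.eventually (eventually_pos_sum_range_succ_mul_pow hlead)).exists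
  have hle := hN n hnN
  rw [← Complex.ofReal_intCast, Complex.im_sum_mul_ofReal_pow_mul_conj, sum_range_succ] at hle
  simp only [him, hcr, zero_mul, add_zero] at hle
  rw [hr] at hpos
  linarith

theorem quadratic_ineq_from_half_plane
    (r : ℕ) (hr : 1 ≤ r) (a b : ℕ → ℝ)
    (hab : ¬(a r = 0 ∧ b r = 0))
    (h : ∃ N : ℤ, ∀ n : ℤ, N ≤ n →
      ((∑ k ∈ Finset.range (r + 1), (a k + Complex.I * b k) * (n : ℂ) ^ k) *
        (starRingEnd ℂ) (a r + Complex.I * b r)).im ≤ 0) :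
    0 ≤ b r * a (r - 1) - b (r - 1) * a r :=
  quadratic_ineq_from_half_plane_general r a b h
end

section
/- Let t > 0, l ≥ 1, and for k = 1,…,l let a_k, b_k, c_k, d_k be real numbers with b_k > 0, such that: (i) the slopes satisfy −a_1/b_1 > −a_2/b_2 > ⋯ > −a_l/b_l; (ii) b_k d_k − c_k a_k ≥ 0 for every k; and (iii) for every 1 ≤ j ≤ l, (Σ_{k=1}^j (−a_k + t c_k)) / (Σ_{k=1}^j b_k) ≤ (−A + tC)/B, where A = Σ_k a_k, B = Σ_k b_k, C = Σ_k c_k, D = Σ_k d_k. Then B·D − A·C ≥ (1/t) · Σ_{1 ≤ i < j ≤ l} ( (a_i/√(b_i))√(b_j) − (a_j/√(b_j))√(b_i) )² ≥ 0. Moreover, if B·D − A·C = 0 then l = 1. -/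
open Finset

/-!
Put `z_k = -a_k + t c_k`, `Z = ∑ z_k` and `x_k = B z_k - Z b_k`. Semistability says that the
proper partial sums of `x` are nonpositive, and `∑ x_k = 0`; since the slopes `-a_k / b_k`
decrease, Abel summation gives `∑ x_k (-a_k / b_k) ≤ 0`. Expanded and combined with
`c_k a_k / b_k ≤ d_k`, this reads `B ∑ a_k² / b_k - A² ≤ t (B D - A C)`. By Lagrange's identity
the left side is `∑_{i<j} b_i b_j (a_i / b_i - a_j / b_j)²`, which is positive as soon as two
slopes differ.
-/

theorem sum_Icc_mul_le_sum_mul_of_antitone {R : Type*} [CommRing R] [LinearOrder R]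
    [IsStrictOrderedRing R] (x μ : ℕ → R) {l : ℕ}
    (hμ : ∀ k, 1 ≤ k → k < l → μ (k + 1) ≤ μ k)
    (hx : ∀ j, 1 ≤ j → j < l → ∑ k ∈ Icc 1 j, x k ≤ 0) :
    ∑ k ∈ Icc 1 l, x k * μ k ≤ (∑ k ∈ Icc 1 l, x k) * μ l := by
  induction l with
  | zero => simp
  | succ n ih =>
    rcases Nat.eq_zero_or_pos n with rfl | hn
    · simp
    rw [sum_Icc_succ_top (by omega), sum_Icc_succ_top (by omega), add_mul]
    have hX : ∑ k ∈ Icc 1 n, x k ≤ 0 := hx n hn (by omega)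
    calc ∑ k ∈ Icc 1 n, x k * μ k + x (n + 1) * μ (n + 1)
        ≤ (∑ k ∈ Icc 1 n, x k) * μ n + x (n + 1) * μ (n + 1) := by
          gcongr
          exact ih (fun k hk hkn => hμ k hk (by omega)) (fun j hj hjn => hx j hj (by omega))
      _ ≤ (∑ k ∈ Icc 1 n, x k) * μ (n + 1) + x (n + 1) * μ (n + 1) := by
          gcongr ?_ + _
          exact mul_le_mul_of_nonpos_left (hμ n hn (by omega)) hX

theorem sum_product_eq_two_nsmul_sum_filter_lt {ι M : Type*} [LinearOrder ι] [AddCommMonoid M]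
    (s : Finset ι) (g : ι → ι → M) (hsymm : ∀ i j, g i j = g j i) (hdiag : ∀ i, g i i = 0) :
    ∑ i ∈ s, ∑ j ∈ s, g i j = 2 • ∑ p ∈ (s ×ˢ s).filter (fun p => p.1 < p.2), g p.1 p.2 := by
  have hswap : ∑ p ∈ (s ×ˢ s).filter (fun p => ¬ p.1 < p.2), g p.1 p.2
      = ∑ p ∈ (s ×ˢ s).filter (fun p => p.1 < p.2), g p.1 p.2 := by
    rw [← sum_filter_of_ne (p := fun p : ι × ι => p.2 < p.1), filter_filter]
    · refine sum_nbij' Prod.swap Prod.swap ?_ ?_ (fun _ _ => rfl) (fun _ _ => rfl)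
        (fun p _ => hsymm _ _) <;> · intro p; simp +contextual [and_comm, le_of_lt]
    · rintro ⟨i, j⟩ hij hne
      dsimp only at hne ⊢
      refine lt_of_le_of_ne (not_lt.mp (mem_filter.mp hij).2) ?_
      rintro rfl
      exact hne (hdiag _)
  rw [← sum_product', ← sum_filter_add_sum_filter_not _ (fun p : ι × ι => p.1 < p.2), hswap,
    two_nsmul]

theorem sum_filter_lt_mul_mul_sub_sq {ι R : Type*} [LinearOrder ι] [Field R] [CharZero R]
    (s : Finset ι) (w r : ι → R) :
    ∑ p ∈ (s ×ˢ s).filter (fun p => p.1 < p.2), w p.1 * w p.2 * (r p.1 - r p.2) ^ 2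
      = (∑ i ∈ s, w i) * (∑ i ∈ s, w i * r i ^ 2) - (∑ i ∈ s, w i * r i) ^ 2 := by
  have htwice := sum_product_eq_two_nsmul_sum_filter_lt s (fun i j => w i * w j * (r i - r j) ^ 2)
    (fun i j => by ring) (fun i => by ring)
  have hexp : ∑ i ∈ s, ∑ j ∈ s, w i * w j * (r i - r j) ^ 2
      = 2 * ((∑ i ∈ s, w i) * (∑ i ∈ s, w i * r i ^ 2) - (∑ i ∈ s, w i * r i) ^ 2) := by
    calc ∑ i ∈ s, ∑ j ∈ s, w i * w j * (r i - r j) ^ 2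
        = ∑ i ∈ s, ∑ j ∈ s, (w i * (w j * r j ^ 2) + w j * (w i * r i ^ 2)
            - 2 * (w i * r i) * (w j * r j)) := by
          refine sum_congr rfl fun i _ => sum_congr rfl fun j _ => by ring
      _ = _ := by
          simp only [sum_add_distrib, sum_sub_distrib, ← mul_sum, ← sum_mul]
          ring
  rw [hexp, two_nsmul, ← two_mul] at htwice
  exact (mul_left_cancel₀ two_ne_zero htwice).symm

theorem div_sqrt_mul_sqrt_sub_sq (a a' b b' : ℝ) (hb : 0 < b) (hb' : 0 < b') :
    (a / √b * √b' - a' / √b' * √b) ^ 2 = b * b' * (a / b - a' / b') ^ 2 := by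
  obtain ⟨u, hu, rfl⟩ : ∃ u, 0 < u ∧ b = u ^ 2 :=
    ⟨√b, Real.sqrt_pos.mpr hb, (Real.sq_sqrt hb.le).symm⟩
  obtain ⟨v, hv, rfl⟩ : ∃ v, 0 < v ∧ b' = v ^ 2 :=
    ⟨√b', Real.sqrt_pos.mpr hb', (Real.sq_sqrt hb'.le).symm⟩
  rw [Real.sqrt_sq hu.le, Real.sqrt_sq hv.le]
  field_simp

theorem sum_filter_lt_div_sqrt_mul_sqrt_sub_sq {ι : Type*} [LinearOrder ι] (s : Finset ι)
    (a b : ι → ℝ) (hb : ∀ i ∈ s, 0 < b i) :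
    ∑ p ∈ (s ×ˢ s).filter (fun p => p.1 < p.2),
        (a p.1 / √(b p.1) * √(b p.2) - a p.2 / √(b p.2) * √(b p.1)) ^ 2
      = (∑ i ∈ s, b i) * (∑ i ∈ s, a i ^ 2 / b i) - (∑ i ∈ s, a i) ^ 2 := by
  have hweights : ∀ i ∈ s, b i * (a i / b i) ^ 2 = a i ^ 2 / b i ∧ b i * (a i / b i) = a i :=
    fun i hi => by constructor <;> field_simp [(hb i hi).ne']
  rw [sum_congr rfl fun i hi => (hweights i hi).1 |>.symm,
    sum_congr rfl fun i hi => (hweights i hi).2 |>.symm, ← sum_filter_lt_mul_mul_sub_sq]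
  refine sum_congr rfl fun p hp => ?_
  simp only [mem_filter, mem_product] at hp
  exact div_sqrt_mul_sqrt_sub_sq _ _ _ _ (hb _ hp.1.1) (hb _ hp.1.2)

theorem mul_sum_sq_div_sub_sq_le_of_semistable (t : ℝ) (ht : 0 ≤ t) {l : ℕ} (hl : 1 ≤ l)
    (a b c d : ℕ → ℝ) (hb : ∀ k ∈ Icc 1 l, 0 < b k)
    (hslope : ∀ k, 1 ≤ k → k < l → -a (k + 1) / b (k + 1) ≤ -a k / b k)
    (hquad : ∀ k ∈ Icc 1 l, 0 ≤ b k * d k - c k * a k)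
    (hsemistable : ∀ j, 1 ≤ j → j < l →
      (∑ k ∈ Icc 1 j, (-a k + t * c k)) / (∑ k ∈ Icc 1 j, b k)
        ≤ (-(∑ k ∈ Icc 1 l, a k) + t * (∑ k ∈ Icc 1 l, c k)) / (∑ k ∈ Icc 1 l, b k)) :
    (∑ k ∈ Icc 1 l, b k) * (∑ k ∈ Icc 1 l, a k ^ 2 / b k) - (∑ k ∈ Icc 1 l, a k) ^ 2
      ≤ t * ((∑ k ∈ Icc 1 l, b k) * (∑ k ∈ Icc 1 l, d k)
        - (∑ k ∈ Icc 1 l, a k) * (∑ k ∈ Icc 1 l, c k)) := by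
  set A := ∑ k ∈ Icc 1 l, a k
  set B := ∑ k ∈ Icc 1 l, b k
  set C := ∑ k ∈ Icc 1 l, c k
  set D := ∑ k ∈ Icc 1 l, d k
  have hpartial : ∀ j, 1 ≤ j → j ≤ l → 0 < ∑ k ∈ Icc 1 j, b k := fun j hj hjl =>
    sum_pos (fun k hk => hb k (Icc_subset_Icc_right hjl hk)) (nonempty_Icc.mpr hj)
  have hB : 0 < B := hpartial l hl le_rfl
  set x : ℕ → ℝ := fun k => B * (-a k + t * c k) - (-A + t * C) * b k
  have hx : ∀ j, 1 ≤ j → j < l → ∑ k ∈ Icc 1 j, x k ≤ 0 := by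
    intro j hj hjl
    have := (div_le_div_iff₀ (hpartial j hj hjl.le) hB).mp (hsemistable j hj hjl)
    simp only [x, sum_sub_distrib, ← mul_sum]
    linarith
  have hxl : ∑ k ∈ Icc 1 l, x k = 0 := by
    simp only [x, sum_sub_distrib, ← mul_sum, sum_add_distrib, sum_neg_distrib]
    ring
  have habel : ∑ k ∈ Icc 1 l, x k * (-a k / b k) ≤ 0 :=
    (sum_Icc_mul_le_sum_mul_of_antitone x _ hslope hx).trans_eq (by rw [hxl, zero_mul])
  have hexpand : ∑ k ∈ Icc 1 l, x k * (-a k / b k)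
      = B * (∑ k ∈ Icc 1 l, a k ^ 2 / b k - t * ∑ k ∈ Icc 1 l, c k * a k / b k)
        + (-A + t * C) * A := by
    rw [mul_sum, mul_sum, ← sum_sub_distrib, mul_sum, ← sum_add_distrib]
    refine sum_congr rfl fun k hk => ?_
    field_simp [(hb k hk).ne']
    ring
  have hquad' : ∑ k ∈ Icc 1 l, c k * a k / b k ≤ D :=
    sum_le_sum fun k hk => by rw [div_le_iff₀ (hb k hk)]; linarith [hquad k hk]
  linarith [mul_le_mul_of_nonneg_left hquad' (mul_nonneg ht hB.le)]

theorem bogomolov_type_numerical_core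
    (t : ℝ) (ht : 0 < t) (l : ℕ) (hl : 1 ≤ l)
    (a b c d : ℕ → ℝ)
    (hb : ∀ k ∈ Finset.Icc 1 l, 0 < b k)
    (hslope : ∀ k : ℕ, 1 ≤ k → k < l → -a k / b k > -a (k + 1) / b (k + 1))
    (hquad : ∀ k ∈ Finset.Icc 1 l, 0 ≤ b k * d k - c k * a k)
    (hsemistable : ∀ j : ℕ, 1 ≤ j → j ≤ l →
      (∑ k ∈ Finset.Icc 1 j, (-a k + t * c k)) / (∑ k ∈ Finset.Icc 1 j, b k)
        ≤ (-(∑ k ∈ Finset.Icc 1 l, a k) + t * (∑ k ∈ Finset.Icc 1 l, c k))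
            / (∑ k ∈ Finset.Icc 1 l, b k)) :
    ((∑ k ∈ Finset.Icc 1 l, b k) * (∑ k ∈ Finset.Icc 1 l, d k)
        - (∑ k ∈ Finset.Icc 1 l, a k) * (∑ k ∈ Finset.Icc 1 l, c k)
      ≥ (1 / t) * ∑ p ∈ (Finset.Icc 1 l ×ˢ Finset.Icc 1 l).filter (fun p => p.1 < p.2),
          (a p.1 / Real.sqrt (b p.1) * Real.sqrt (b p.2)
            - a p.2 / Real.sqrt (b p.2) * Real.sqrt (b p.1)) ^ 2) ∧
    (0 ≤ (1 / t) * ∑ p ∈ (Finset.Icc 1 l ×ˢ Finset.Icc 1 l).filter (fun p => p.1 < p.2),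
          (a p.1 / Real.sqrt (b p.1) * Real.sqrt (b p.2)
            - a p.2 / Real.sqrt (b p.2) * Real.sqrt (b p.1)) ^ 2) ∧
    ((∑ k ∈ Finset.Icc 1 l, b k) * (∑ k ∈ Finset.Icc 1 l, d k)
        - (∑ k ∈ Finset.Icc 1 l, a k) * (∑ k ∈ Finset.Icc 1 l, c k) = 0 → l = 1) := by
  have hkey := mul_sum_sq_div_sub_sq_le_of_semistable t ht.le hl a b c d hb
    (fun k hk hkl => (hslope k hk hkl).le) hquad (fun j hj hjl => hsemistable j hj hjl.le)
  rw [← sum_filter_lt_div_sqrt_mul_sqrt_sub_sq _ a b hb] at hkey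
  set P := ∑ p ∈ (Icc 1 l ×ˢ Icc 1 l).filter (fun p => p.1 < p.2),
    (a p.1 / √(b p.1) * √(b p.2) - a p.2 / √(b p.2) * √(b p.1)) ^ 2
  refine ⟨?_, by positivity, fun hzero => ?_⟩
  · rwa [ge_iff_le, one_div_mul_eq_div, div_le_iff₀' ht]
  by_contra hl1
  have h1 : 1 ∈ Icc 1 l := mem_Icc.mpr ⟨le_rfl, hl⟩
  have h2 : 2 ∈ Icc 1 l := mem_Icc.mpr ⟨one_le_two, by omega⟩
  have hterm : 0 < (a 1 / √(b 1) * √(b 2) - a 2 / √(b 2) * √(b 1)) ^ 2 := by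
    have hslopes : a 1 / b 1 - a 2 / b 2 ≠ 0 := by
      have := hslope 1 le_rfl (by omega)
      rw [neg_div, neg_div] at this
      linarith
    rw [div_sqrt_mul_sqrt_sub_sq _ _ _ _ (hb 1 h1) (hb 2 h2)]
    exact mul_pos (mul_pos (hb 1 h1) (hb 2 h2)) (pow_two_pos_of_ne_zero hslopes)
  have hmem : ((1, 2) : ℕ × ℕ) ∈ (Icc 1 l ×ˢ Icc 1 l).filter (fun p => p.1 < p.2) :=
    mem_filter.mpr ⟨mem_product.mpr ⟨h1, h2⟩, one_lt_two⟩
  have hP : 0 < P := sum_pos' (fun p _ => sq_nonneg _) ⟨(1, 2), hmem, hterm⟩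
  linarith [hzero ▸ hkey]
end
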